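/- Let (f_t)_{t≥0} be a Loewner chain of covering mappings with images Ω_t, evolution family (φ_{s,t}), and fix 0 ≤ s ≤ t. If the inclusion-induced homomorphism i*_{s,t} : π₁(Ω_s, 0) → π₁(Ω_t, 0) is surjective (hence an isomorphism, it being always injective), then every deck transformation F ∈ DT(f_t) satisfies F(0) ∈ φ_{s,t}(B) and consequently F(φ_{s,t}(B)) = φ_{s,t}(B). -/

import Mathlib

open CategoryTheory FundamentalGroupoid Metric Set

/-- The homomorphism induced on fundamental groups by a continuous map. -/
noncomputable def pi1map {X Y : Type} [TopologicalSpace X] [TopologicalSpace Y]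
    (φ : C(X, Y)) (x : X) :
    Aut (FundamentalGroupoid.mk x) →* Aut (FundamentalGroupoid.mk (φ x)) :=
  Functor.mapAut (FundamentalGroupoid.mk x)
    (πₘ (show TopCat.of X ⟶ TopCat.of Y from TopCat.ofHom φ) : FundamentalGroupoid X ⥤ FundamentalGroupoid Y)

/-- `f` restricted to `U` is a covering map onto `Ω`. -/
def IsCoveringOnto {E F : Type} [TopologicalSpace E] [TopologicalSpace F]
    (f : E → F) (U : Set E) (Ω : Set F) : Prop :=
  Set.SurjOn f U Ω ∧
    ∃ h : Set.MapsTo f U Ω, IsCoveringMap (Set.MapsTo.restrict f U Ω h)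

/-!
Write `p = f_t` and `q = f_s` as covering maps on the ball `B`, and `ι : Ω_s → Ω_t` for the
inclusion. If `π₁(Ω_s) → π₁(Ω_t)` is onto, the loop `p ∘ [0, F 0]` is homotopic to a loop
`ι ∘ d` of `Ω_s`. The `p`-lifts from `0` of homotopic loops end at the same point, and the lift
of `ι ∘ d` is `φ` composed with the `q`-lift of `d`, so `F 0 ∈ φ(B)`. Next, any continuous
`ψ : B → B` with `p ∘ ψ = ι ∘ q` has as range the path component in `p⁻¹(Ω_s)` of each of its
values: by uniqueness of lifts through `p`, a path there is `ψ` composed with the `q`-lift of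
its projection. Hence `φ` and `F ∘ φ`, which share the value `F 0`, have the same range.
-/

open scoped unitInterval
open Topology

section

variable {B B' Y Z : Type*} [TopologicalSpace B] [TopologicalSpace B'] [TopologicalSpace Y]
  [TopologicalSpace Z] {p : B → Y} {q : B' → Z} {ι : C(Z, Y)}

theorem IsCoveringMap.range_eq_pathComponentIn [PathConnectedSpace B'] (hp : IsCoveringMap p)
    (hq : IsCoveringMap q) (hι : IsEmbedding ι) {ψ : B' → B} (hψ : Continuous ψ)
    (hψlift : p ∘ ψ = ι ∘ q) (b : B') :
    range ψ = pathComponentIn (p ⁻¹' range ι) (ψ b) := by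
  apply Subset.antisymm
  · rintro _ ⟨z, rfl⟩
    exact ⟨(PathConnectedSpace.somePath b z).map hψ,
      fun t => ⟨q _, (congrFun hψlift _).symm⟩⟩
  · rintro w ⟨α, hα⟩
    choose γ hγ using hα
    have hγc : Continuous γ :=
      hι.continuous_iff.2 <| by
        simpa only [Function.comp_def, hγ] using hp.continuous.comp α.continuous
    have hγ0 : γ 0 = q b := hι.injective (by rw [hγ, α.source]; exact congrFun hψlift b)
    obtain ⟨Γ, hΓlift, hΓ0⟩ := hq.exists_path_lifts ⟨γ, hγc⟩ b hγ0
    have hψΓ : ψ ∘ Γ = α := hp.eq_of_comp_eq (hψ.comp Γ.continuous) α.continuous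
      (funext fun t => (congrFun hψlift (Γ t)).trans
        ((congrArg ι (congrFun hΓlift t)).trans (hγ t))) 0
      (by simp [hΓ0])
    exact ⟨Γ 1, by simpa using congrFun hψΓ 1⟩

theorem IsCoveringMap.range_eq_of_mem_range [PathConnectedSpace B'] (hp : IsCoveringMap p)
    (hq : IsCoveringMap q) (hι : IsEmbedding ι) {ψ₁ ψ₂ : B' → B} (hψ₁ : Continuous ψ₁)
    (hψ₂ : Continuous ψ₂) (hψ₁lift : p ∘ ψ₁ = ι ∘ q) (hψ₂lift : p ∘ ψ₂ = ι ∘ q) {b : B'}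
    (hb : ψ₁ b ∈ range ψ₂) : range ψ₁ = range ψ₂ := by
  rw [hp.range_eq_pathComponentIn hq hι hψ₂ hψ₂lift b] at hb ⊢
  rw [hp.range_eq_pathComponentIn hq hι hψ₁ hψ₁lift b, pathComponentIn_congr hb]

end

section

variable {B B' : Type*} {Y Z : Type} [TopologicalSpace B] [TopologicalSpace B']
  [TopologicalSpace Y] [TopologicalSpace Z] {p : B → Y} {q : B' → Z} {ι : C(Z, Y)}

theorem IsCoveringMap.mem_range_of_surjective_pi1map [PathConnectedSpace B]
    (hp : IsCoveringMap p) (hq : IsCoveringMap q) {ψ : B' → B} (hψ : Continuous ψ)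
    (hψlift : p ∘ ψ = ι ∘ q) {b : B'} (hsurj : Function.Surjective (pi1map ι (q b)))
    {e : B} (he : p e = p (ψ b)) : e ∈ range ψ := by
  have hb : p (ψ b) = ι (q b) := congrFun hψlift b
  let seg := PathConnectedSpace.somePath (ψ b) e
  let loop : Path (ι (q b)) (ι (q b)) := (seg.map hp.continuous).cast hb.symm (he.trans hb).symm
  obtain ⟨g, hg⟩ := hsurj ((Groupoid.isoEquivHom _ _).symm (Path.Homotopic.Quotient.mk loop))
  obtain ⟨d, hd⟩ := Path.Homotopic.Quotient.mk_surjective g.hom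
  have hhom : (d.map ι.continuous).Homotopic loop := by
    rw [← Path.Homotopic.Quotient.eq, Path.Homotopic.Quotient.mk_map, hd]
    exact congrArg Iso.hom hg
  obtain ⟨Γ, hΓlift, hΓ0⟩ := hq.exists_path_lifts d b d.source
  let ψΓ : C(I, B) := ⟨ψ ∘ Γ, hψ.comp Γ.continuous⟩
  have hends : (seg : C(I, B)).HomotopicRel ψΓ {0, 1} := by
    rw [hp.homotopicRel_iff_comp ⟨0, .inl rfl, by simp [ψΓ, hΓ0]⟩]
    have hseg : ContinuousMap.comp ⟨p, hp.continuous⟩ (seg : C(I, B)) = loop.toContinuousMap :=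
      rfl
    have hψΓ : ContinuousMap.comp ⟨p, hp.continuous⟩ ψΓ = (d.map ι.continuous).toContinuousMap :=
      ContinuousMap.ext fun t => (congrFun hψlift (Γ t)).trans (congrArg ι (congrFun hΓlift t))
    rw [hseg, hψΓ]
    exact hhom.symm
  have h := (hends.some.eq_fst 0 (.inr rfl)).symm.trans (hends.some.eq_snd 0 (.inr rfl))
  exact ⟨Γ 1, h.symm.trans seg.target⟩

theorem IsCoveringMap.deck_preserves_range_of_surjective_pi1map [PathConnectedSpace B]
    [PathConnectedSpace B'] (hp : IsCoveringMap p) (hq : IsCoveringMap q) (hι : IsEmbedding ι) {ψ : B' → B} (hψ : Continuous ψ) (hψlift : p ∘ ψ = ι ∘ q) {b : B'}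
    (hsurj : Function.Surjective (pi1map ι (q b))) {F : B → B} (hF : Continuous F)
    (hFdeck : p ∘ F = p) : F (ψ b) ∈ range ψ ∧ range (F ∘ ψ) = range ψ := by
  have hFψ : F (ψ b) ∈ range ψ :=
    hp.mem_range_of_surjective_pi1map hq hψ hψlift hsurj (congrFun hFdeck _)
  exact ⟨hFψ, hp.range_eq_of_mem_range hq hι (hF.comp hψ) hψ
    (by rw [← Function.comp_assoc, hFdeck, hψlift]) hψlift hFψ⟩

end

theorem deck_preserves_evolution_image_of_pi1_surjective_general
    {E : Type} [NormedAddCommGroup E] [NormedSpace ℂ E]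
    (Ωs Ωt : Set E) (h0s : (0 : E) ∈ Ωs) (hsub : Ωs ⊆ Ωt)
    (fs ft : E → E)
    (hfscov : IsCoveringOnto fs (ball (0 : E) 1) Ωs)
    (hftcov : IsCoveringOnto ft (ball (0 : E) 1) Ωt)
    (hfs0 : fs 0 = 0)
    (φ : E → E)
    (hφhol : DifferentiableOn ℂ φ (ball (0 : E) 1))
    (hφmaps : Set.MapsTo φ (ball (0 : E) 1) (ball (0 : E) 1))
    (hφ0 : φ 0 = 0)
    (hφlift : ∀ z ∈ ball (0 : E) 1, ft (φ z) = fs z)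
    (hsurj : Function.Surjective
      (pi1map (⟨Set.inclusion hsub, continuous_inclusion hsub⟩ : C(Ωs, Ωt))
        (⟨0, h0s⟩ : Ωs))) :
    ∀ F : E → E,
      Set.BijOn F (ball (0 : E) 1) (ball (0 : E) 1) →
      DifferentiableOn ℂ F (ball (0 : E) 1) →
      (∀ z ∈ ball (0 : E) 1, ft (F z) = ft z) →
      F 0 ∈ φ '' ball (0 : E) 1 ∧
        F '' (φ '' ball (0 : E) 1) = φ '' ball (0 : E) 1 := by
  intro F hFbij hFhol hFdeck
  obtain ⟨hms, hq⟩ := hfscov.2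
  obtain ⟨hmt, hp⟩ := hftcov.2
  have hFmaps := hFbij.mapsTo
  have : PathConnectedSpace (ball (0 : E) 1) := isPathConnected_iff_pathConnectedSpace.1
    ((convex_ball 0 1).isPathConnected ⟨0, mem_ball_self one_pos⟩)
  let b₀ : ball (0 : E) 1 := ⟨0, mem_ball_self one_pos⟩
  rw [← show hms.restrict fs _ _ b₀ = ⟨0, h0s⟩ from Subtype.ext hfs0] at hsurj
  obtain ⟨⟨z, hz⟩, hrange⟩ := hp.deck_preserves_range_of_surjective_pi1map hq
    (ι := ⟨Set.inclusion hsub, continuous_inclusion hsub⟩) (IsEmbedding.inclusion hsub)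
    (hφhol.continuousOn.mapsToRestrict hφmaps)
    (funext fun z => Subtype.ext (hφlift z z.2)) hsurj
    (hFhol.continuousOn.mapsToRestrict hFmaps) (funext fun z => Subtype.ext (hFdeck z z.2))
  have himage {ψ : E → E} (h : MapsTo ψ (ball 0 1) (ball 0 1)) :
      Subtype.val '' range (h.restrict ψ _ _) = ψ '' ball 0 1 := by
    rw [← range_comp, h.coe_restrict, range_domRestrict]
  refine ⟨⟨z, z.2, (congrArg Subtype.val hz).trans (congrArg F hφ0)⟩, ?_⟩
  rw [← image_comp, ← himage hφmaps, ← himage (hFmaps.comp hφmaps)]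
  exact congrArg _ hrange

/-- if the inclusion-induced map `π₁(Ω_s,0) → π₁(Ω_t,0)` is surjective,
then every deck transformation `F` of `f_t` satisfies `F(0) ∈ φ_{s,t}(B)`, and hence
`F(φ_{s,t}(B)) = φ_{s,t}(B)`. -/
theorem deck_preserves_evolution_image_of_pi1_surjective
    {E : Type} [NormedAddCommGroup E] [NormedSpace ℂ E] [FiniteDimensional ℂ E]
    (Ωs Ωt : Set E) (h0s : (0 : E) ∈ Ωs) (hsub : Ωs ⊆ Ωt)
    (fs ft : E → E)
    (hfshol : DifferentiableOn ℂ fs (ball (0 : E) 1))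
    (hfthol : DifferentiableOn ℂ ft (ball (0 : E) 1))
    (hfscov : IsCoveringOnto fs (ball (0 : E) 1) Ωs)
    (hftcov : IsCoveringOnto ft (ball (0 : E) 1) Ωt)
    (hfs0 : fs 0 = 0) (hft0 : ft 0 = 0)
    (φ : E → E)
    (hφhol : DifferentiableOn ℂ φ (ball (0 : E) 1))
    (hφmaps : Set.MapsTo φ (ball (0 : E) 1) (ball (0 : E) 1))
    (hφinj : Set.InjOn φ (ball (0 : E) 1))
    (hφ0 : φ 0 = 0)
    (hφlift : ∀ z ∈ ball (0 : E) 1, ft (φ z) = fs z)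
    (hsurj : Function.Surjective
      (pi1map (⟨Set.inclusion hsub, continuous_inclusion hsub⟩ : C(Ωs, Ωt))
        (⟨0, h0s⟩ : Ωs))) :
    ∀ F : E → E,
      Set.BijOn F (ball (0 : E) 1) (ball (0 : E) 1) →
      DifferentiableOn ℂ F (ball (0 : E) 1) →
      (∀ z ∈ ball (0 : E) 1, ft (F z) = ft z) →
      F 0 ∈ φ '' ball (0 : E) 1 ∧
        F '' (φ '' ball (0 : E) 1) = φ '' ball (0 : E) 1 :=
  deck_preserves_evolution_image_of_pi1_surjective_general Ωs Ωt h0s hsub fs ft hfscov hftcov hfs0 φ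
    hφhol hφmaps hφ0 hφlift hsurj
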